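/- Let ℓ be an odd prime, r ≥ 1, and set N = ℓ^r + 1. Then the ℓ-adic valuation of 2·binom(1,1)·binom(1+ℓ^{r-1}, ℓ^{r-1})·binom(1+2ℓ^{r-1}, ℓ^{r-1})···binom(1+ℓ·ℓ^{r-1}, ℓ^{r-1}) equals 1, where the product runs over binomials binom(1+jℓ^{r-1}, ℓ^{r-1}) for j = 1, ..., ℓ. -/

import Mathlib

open Finset

private lemma tele (m : ℕ) : ∀ t : ℕ,
    (∏ j ∈ Finset.Icc 1 t, Nat.choose (1 + j * m) m) * (Nat.factorial m) ^ t =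
      Nat.factorial (1 + t * m)
  | 0 => by simp
  | (t + 1) => by
    rw [Finset.prod_Icc_succ_top (Nat.succ_le_succ (Nat.zero_le t)), pow_succ]
    have hmn : m ≤ 1 + (t + 1) * m := by nlinarith
    have key := Nat.choose_mul_factorial_mul_factorial hmn
    have hsub : 1 + (t + 1) * m - m = 1 + t * m := by
      have : (t + 1) * m = t * m + m := by ring
      omega
    rw [hsub] at key
    calc (∏ j ∈ Finset.Icc 1 t, Nat.choose (1 + j * m) m) *
          Nat.choose (1 + (t + 1) * m) m * ((Nat.factorial m) ^ t * Nat.factorial m)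
        = ((∏ j ∈ Finset.Icc 1 t, Nat.choose (1 + j * m) m) * (Nat.factorial m) ^ t) *
          (Nat.choose (1 + (t + 1) * m) m * Nat.factorial m) := by ring
      _ = Nat.factorial (1 + t * m) * (Nat.choose (1 + (t + 1) * m) m * Nat.factorial m) := by
          rw [tele m t]
      _ = Nat.choose (1 + (t + 1) * m) m * Nat.factorial m * Nat.factorial (1 + t * m) := by
          ring
      _ = Nat.factorial (1 + (t + 1) * m) := key

private lemma val_pow_factorial (ℓ : ℕ) [Fact ℓ.Prime] : ∀ s : ℕ,
    (ℓ - 1) * padicValNat ℓ (Nat.factorial (ℓ ^ s)) + 1 = ℓ ^ s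
  | 0 => by simp
  | (s + 1) => by
    obtain ⟨n, rfl⟩ : ∃ n, ℓ = n + 1 :=
      ⟨ℓ - 1, (Nat.succ_pred_eq_of_pos (Fact.out : ℓ.Prime).pos).symm⟩
    have hpow : (n + 1) ^ (s + 1) = (n + 1) * (n + 1) ^ s := by ring
    rw [hpow, padicValNat_factorial_mul]
    have ih := val_pow_factorial (n + 1) s
    simp only [Nat.add_sub_cancel] at ih ⊢
    set a := padicValNat (n + 1) (Nat.factorial ((n + 1) ^ s)) with ha
    have : (n + 1) * (n + 1) ^ s = n * (n + 1) ^ s + (n + 1) ^ s := by ring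
    rw [this, Nat.mul_add]
    generalize hb : n * (n + 1) ^ s = b at *
    generalize hc : n * a = c at *
    omega

/-- Let `ℓ` be an odd prime, `r ≥ 1`.  Then the `ℓ`-adic valuation of
`2 · binom(1,1) · ∏_{j=1}^{ℓ} binom(1 + j·ℓ^{r-1}, ℓ^{r-1})` equals `1`. -/
theorem stmt1 (ℓ r : ℕ) (hℓ : ℓ.Prime) (hodd : Odd ℓ) (hr : 1 ≤ r) :
    (2 * Nat.choose 1 1 *
        ∏ j ∈ Finset.Icc 1 ℓ,
          Nat.choose (1 + j * ℓ ^ (r - 1)) (ℓ ^ (r - 1))).factorization ℓ = 1 := by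
  haveI : Fact ℓ.Prime := ⟨hℓ⟩
  set m := ℓ ^ (r - 1) with hm
  set P := ∏ j ∈ Finset.Icc 1 ℓ, Nat.choose (1 + j * m) m with hP
  have hPpos : 0 < P := by
    apply Finset.prod_pos
    intro j hj
    have h1 : 1 ≤ j := (Finset.mem_Icc.mp hj).1
    exact Nat.choose_pos (by nlinarith)
  -- telescoping identity
  have htele : P * (Nat.factorial m) ^ ℓ = Nat.factorial (1 + ℓ * m) := by
    have := tele m ℓ
    simpa [mul_comm] using this
  -- valuation of both sides
  have hfacpos : 0 < Nat.factorial m := Nat.factorial_pos m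
  have hval : padicValNat ℓ P + ℓ * padicValNat ℓ (Nat.factorial m) =
      padicValNat ℓ (Nat.factorial (1 + ℓ * m)) := by
    rw [← htele, padicValNat.mul hPpos.ne' (pow_ne_zero ℓ hfacpos.ne'),
      padicValNat.pow (Nat.factorial m) ℓ]
  -- RHS valuation via Legendre
  have hrhs : padicValNat ℓ (Nat.factorial (1 + ℓ * m)) =
      padicValNat ℓ (Nat.factorial m) + m := by
    have h1 : (1 : ℕ) < ℓ := hℓ.one_lt
    have := padicValNat_factorial_mul_add (p := ℓ) m h1
    rw [add_comm 1 (ℓ * m), this, padicValNat_factorial_mul]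
  -- prime power factorial valuation
  have hkey : (ℓ - 1) * padicValNat ℓ (Nat.factorial m) + 1 = m :=
    val_pow_factorial ℓ (r - 1)
  -- ℓ ≠ 2
  have hne2 : ℓ ≠ 2 := by
    rintro rfl; exact (by decide : ¬ Odd 2) hodd
  have h2 : (2 : ℕ).factorization ℓ = 0 :=
    Nat.factorization_eq_zero_of_not_dvd (fun hdvd =>
      hne2 ((Nat.prime_dvd_prime_iff_eq hℓ Nat.prime_two).mp hdvd))
  have hPval : padicValNat ℓ P = 1 := by
    rw [hrhs] at hval
    have e1 : ℓ * padicValNat ℓ (Nat.factorial m) =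
        (ℓ - 1) * padicValNat ℓ (Nat.factorial m) + padicValNat ℓ (Nat.factorial m) := by
      obtain ⟨n, rfl⟩ : ∃ n, ℓ = n + 1 := ⟨ℓ - 1, (Nat.succ_pred_eq_of_pos hℓ.pos).symm⟩
      simp [Nat.succ_mul]
    rw [e1] at hval
    generalize hb : (ℓ - 1) * padicValNat ℓ (Nat.factorial m) = b at hval hkey
    omega
  rw [Nat.choose_self, mul_one,
    Nat.factorization_mul (by norm_num) hPpos.ne']
  simp only [Finsupp.coe_add, Pi.add_apply, h2]
  rw [Nat.factorization_def P hℓ, hPval]
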